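/- arXiv:2111.11470 — 2 statements merged into one kernel-verified Lean document; each statement's English description precedes it below -/
import Mathlib

section
/- Let Γ be a finite simple graph, α > 0 a real number, and B ⊊ C ⊊ A ⊆ V(Γ) vertex subsets. If the pair (C,B) is α-rigid and the pair (A,C) is α-rigid, then the pair (A,B) is α-rigid. -/
open Finset

variable {V : Type*} [Fintype V] [DecidableEq V]

/-- The number of edges of `Γ` with both endpoints in `A` and at least one endpoint
in `A \ B`; this is `e(A,B)` from the paper. -/
noncomputable def edgeCount (Γ : SimpleGraph V) (A B : Finset V) : ℕ :=
  Nat.card {e : Sym2 V // e ∈ Γ.edgeSet ∧ (∀ x ∈ e, x ∈ A) ∧ ∃ x ∈ e, x ∈ A ∧ x ∉ B}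

/-- `f_α(A,B) = v(A,B) - α ⬝ e(A,B)`. -/
noncomputable def fW (Γ : SimpleGraph V) (α : ℝ) (A B : Finset V) : ℝ :=
  ((A \ B).card : ℝ) - α * (edgeCount Γ A B : ℝ)

/-- The pair `(A,B)` is `α`-safe. -/
def IsSafe (Γ : SimpleGraph V) (α : ℝ) (A B : Finset V) : Prop :=
  ∀ C : Finset V, B ⊂ C → C ⊆ A → 0 < fW Γ α C B

/-- The pair `(A,B)` is `α`-rigid. -/
def IsRigid (Γ : SimpleGraph V) (α : ℝ) (A B : Finset V) : Prop :=
  ∀ C : Finset V, B ⊆ C → C ⊂ A → fW Γ α A C < 0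

/-- The pair `(A,B)` is `α`-neutral. -/
def IsNeutral (Γ : SimpleGraph V) (α : ℝ) (A B : Finset V) : Prop :=
  (∀ C : Finset V, B ⊂ C → C ⊂ A → 0 < fW Γ α C B) ∧ fW Γ α A B = 0


lemma edgeCount_eq_ncard (Γ : SimpleGraph V) (A B : Finset V) :
    edgeCount Γ A B =
      {e : Sym2 V | e ∈ Γ.edgeSet ∧ (∀ x ∈ e, x ∈ A) ∧ ∃ x ∈ e, x ∈ A ∧ x ∉ B}.ncard :=
  Nat.card_coe_set_eq _

lemma fW_self (Γ : SimpleGraph V) (α : ℝ) (A : Finset V) : fW Γ α A A = 0 := by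
  have h : edgeCount Γ A A = 0 := by
    rw [edgeCount_eq_ncard]
    convert Set.ncard_empty (Sym2 V)
    ext e
    simp only [Set.mem_setOf_eq, Set.mem_empty_iff_false, iff_false]
    rintro ⟨-, -, x, -, hx, hx'⟩
    exact hx' hx
  simp [fW, h]

lemma card_split (A C D : Finset V) (hCA : C ⊆ A) :
    ((A \ D).card : ℝ) = ((A \ (D ∪ C)).card : ℝ) + ((C \ (D ∩ C)).card : ℝ) := by
  have hu : A \ D = (A \ (D ∪ C)) ∪ (C \ (D ∩ C)) := by
    ext x
    simp only [mem_sdiff, mem_union, mem_inter]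
    constructor
    · rintro ⟨hA, hD⟩
      by_cases hC : x ∈ C
      · exact Or.inr ⟨hC, fun h => hD h.1⟩
      · exact Or.inl ⟨hA, fun h => h.elim hD hC⟩
    · rintro (⟨hA, h⟩ | ⟨hC, h⟩)
      · exact ⟨hA, fun hD => h (Or.inl hD)⟩
      · exact ⟨hCA hC, fun hD => h ⟨hD, hC⟩⟩
  have hd : Disjoint (A \ (D ∪ C)) (C \ (D ∩ C)) := by
    rw [Finset.disjoint_left]
    intro x h1 h2
    simp only [mem_sdiff, mem_union, mem_inter] at h1 h2
    exact h1.2 (Or.inr h2.1)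
  rw [hu, Finset.card_union_of_disjoint hd]
  push_cast
  ring

lemma edge_split (Γ : SimpleGraph V) (A C D : Finset V) (hCA : C ⊆ A) :
    edgeCount Γ A (D ∪ C) + edgeCount Γ C (D ∩ C) ≤ edgeCount Γ A D := by
  rw [edgeCount_eq_ncard, edgeCount_eq_ncard, edgeCount_eq_ncard]
  set S1 := {e : Sym2 V | e ∈ Γ.edgeSet ∧ (∀ x ∈ e, x ∈ A) ∧ ∃ x ∈ e, x ∈ A ∧ x ∉ D ∪ C}
  set S2 := {e : Sym2 V | e ∈ Γ.edgeSet ∧ (∀ x ∈ e, x ∈ C) ∧ ∃ x ∈ e, x ∈ C ∧ x ∉ D ∩ C}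
  set S := {e : Sym2 V | e ∈ Γ.edgeSet ∧ (∀ x ∈ e, x ∈ A) ∧ ∃ x ∈ e, x ∈ A ∧ x ∉ D}
  have hsub : S1 ∪ S2 ⊆ S := by
    rintro e (⟨he, hall, x, hxe, hxA, hx⟩ | ⟨he, hall, x, hxe, hxC, hx⟩)
    · exact ⟨he, hall, x, hxe, hxA, fun hD => hx (Finset.mem_union_left _ hD)⟩
    · exact ⟨he, fun y hy => hCA (hall y hy), x, hxe, hCA hxC,
        fun hD => hx (Finset.mem_inter_of_mem hD hxC)⟩
  have hd : Disjoint S1 S2 := by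
    rw [Set.disjoint_left]
    rintro e ⟨-, -, x, hxe, -, hx⟩ ⟨-, hall, -⟩
    exact hx (Finset.mem_union_right _ (hall x hxe))
  calc S1.ncard + S2.ncard = (S1 ∪ S2).ncard :=
        (Set.ncard_union_eq hd (Set.toFinite _) (Set.toFinite _)).symm
    _ ≤ S.ncard := Set.ncard_le_ncard hsub (Set.toFinite _)

/-- transitivity of α-rigidity. -/
theorem stmt2 (Γ : SimpleGraph V) (α : ℝ) (hα : 0 < α) (A B C : Finset V)
    (hBC : B ⊂ C) (hCA : C ⊂ A)
    (hCB : IsRigid Γ α C B) (hAC : IsRigid Γ α A C) :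
    IsRigid Γ α A B := by
  intro D hBD hDA
  by_cases hCD : C ⊆ D
  · exact hAC D hCD hDA
  · have hkey : fW Γ α A D ≤ fW Γ α A (D ∪ C) + fW Γ α C (D ∩ C) := by
      unfold fW
      rw [card_split A C D hCA.subset]
      have h2 : (edgeCount Γ A (D ∪ C) : ℝ) + edgeCount Γ C (D ∩ C) ≤ edgeCount Γ A D := by
        exact_mod_cast edge_split Γ A C D hCA.subset
      nlinarith
    have hE2 : fW Γ α C (D ∩ C) < 0 := by
      apply hCB
      · exact Finset.subset_inter hBD hBC.subset
      · exact Finset.ssubset_iff_subset_ne.mpr ⟨Finset.inter_subset_right,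
          fun h => hCD (by rw [← h]; exact Finset.inter_subset_left)⟩
    have hE1 : fW Γ α A (D ∪ C) ≤ 0 := by
      rcases eq_or_ne (D ∪ C) A with h | h
      · rw [h]; exact le_of_eq (fW_self Γ α A)
      · exact le_of_lt (hAC _ Finset.subset_union_right
          (Finset.ssubset_iff_subset_ne.mpr ⟨Finset.union_subset hDA.subset hCA.subset, h⟩))
    linarith
end

section
/- Let Γ be a finite simple graph, z ∈ V(Γ), and A_1, A_2 ⊆ V(Γ) vertex subsets with A_1 ∩ A_2 = {z} and |A_1|, |A_2| ≥ 2. Assume the pair (A_1,{z}) is 3/5-neutral or 3/5-rigid. Let T = A_1 ∪ A_2 and let B ⊆ V(Γ) with T ⊊ B be such that the pair (B,T) is 3/5-rigid and every vertex of B \ T is joined by a path inside the induced subgraph Γ|_{B \ {z}} to some vertex of A_1 \ {z} and also to some vertex of A_2 \ {z}. Then the pair (B,A_2) is 3/5-rigid. -/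
open Finset

variable {V : Type*} [Fintype V] [DecidableEq V]

def ES (Γ : SimpleGraph V) (A B : Finset V) : Set (Sym2 V) :=
  {e | e ∈ Γ.edgeSet ∧ (∀ x ∈ e, x ∈ A) ∧ ∃ x ∈ e, x ∈ A ∧ x ∉ B}

lemma edgeCount_eq (Γ : SimpleGraph V) (A B : Finset V) :
    edgeCount Γ A B = (ES Γ A B).ncard := rfl

lemma ES_union (Γ : SimpleGraph V) {B C C' : Finset V} (h1 : C ⊆ C') (h2 : C' ⊆ B) :
    ES Γ B C = ES Γ B C' ∪ ES Γ C' C := by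
  ext e
  constructor
  · rintro ⟨he, hall, x, hx, hxB, hxC⟩
    by_cases hc : ∃ y ∈ e, y ∉ C'
    · obtain ⟨y, hy, hyC'⟩ := hc
      exact Or.inl ⟨he, hall, y, hy, hall y hy, hyC'⟩
    · push_neg at hc
      exact Or.inr ⟨he, hc, x, hx, hc x hx, hxC⟩
  · rintro (⟨he, hall, x, hx, hxB, hxC'⟩ | ⟨he, hall, x, hx, hxC', hxC⟩)
    · exact ⟨he, hall, x, hx, hxB, fun hxc => hxC' (h1 hxc)⟩
    · exact ⟨he, fun y hy => h2 (hall y hy), x, hx, h2 hxC', hxC⟩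

lemma ES_disjoint (Γ : SimpleGraph V) (B C C' : Finset V) :
    Disjoint (ES Γ B C') (ES Γ C' C) := by
  rw [Set.disjoint_left]
  rintro e ⟨_, _, x, hx, _, hxC'⟩ ⟨_, hall, _⟩
  exact hxC' (hall x hx)

lemma card_sdiff_split {B C C' : Finset V} (h1 : C ⊆ C') (h2 : C' ⊆ B) :
    (B \ C).card = (B \ C').card + (C' \ C).card := by
  have hu : B \ C = (B \ C') ∪ (C' \ C) := by
    ext x
    simp only [mem_sdiff, mem_union]
    constructor
    · rintro ⟨hxB, hxC⟩
      by_cases h : x ∈ C'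
      · exact Or.inr ⟨h, hxC⟩
      · exact Or.inl ⟨hxB, h⟩
    · rintro (⟨hxB, hxC'⟩ | ⟨hxC', hxC⟩)
      · exact ⟨hxB, fun h => hxC' (h1 h)⟩
      · exact ⟨h2 hxC', hxC⟩
  rw [hu, card_union_of_disjoint]
  rw [disjoint_left]
  rintro x hx hx'
  exact (mem_sdiff.1 hx).2 (mem_sdiff.1 hx').1

lemma fW_split (Γ : SimpleGraph V) (α : ℝ) {B C C' : Finset V} (h1 : C ⊆ C') (h2 : C' ⊆ B) :
    fW Γ α B C = fW Γ α B C' + fW Γ α C' C := by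
  have he : edgeCount Γ B C = edgeCount Γ B C' + edgeCount Γ C' C := by
    rw [edgeCount_eq, edgeCount_eq, edgeCount_eq, ES_union Γ h1 h2,
      Set.ncard_union_eq (ES_disjoint Γ B C C') (Set.toFinite _) (Set.toFinite _)]
  have hv := card_sdiff_split h1 h2
  simp only [fW, he, hv]
  push_cast
  ring

lemma fW_union_le (Γ : SimpleGraph V) {α : ℝ} (hα : 0 ≤ α) (A C : Finset V) :
    fW Γ α (C ∪ A) C ≤ fW Γ α A (A ∩ C) := by
  have hv : (C ∪ A) \ C = A \ (A ∩ C) := by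
    ext x
    simp only [mem_sdiff, mem_union, mem_inter]
    tauto
  have he : edgeCount Γ A (A ∩ C) ≤ edgeCount Γ (C ∪ A) C := by
    rw [edgeCount_eq, edgeCount_eq]
    apply Set.ncard_le_ncard _ (Set.toFinite _)
    rintro e ⟨he, hall, x, hx, hxA, hxC⟩
    refine ⟨he, fun y hy => mem_union_right _ (hall y hy), x, hx,
      mem_union_right _ hxA, fun h => hxC (mem_inter.2 ⟨hxA, h⟩)⟩
  simp only [fW, hv]
  have : α * (edgeCount Γ A (A ∩ C) : ℝ) ≤ α * (edgeCount Γ (C ∪ A) C : ℝ) := by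
    apply mul_le_mul_of_nonneg_left (by exact_mod_cast he) hα
  linarith

lemma walk_cross {Γ : SimpleGraph V} (S : Set V) :
    ∀ {v w : V} (p : Γ.Walk v w), v ∉ S → w ∈ S →
    ∃ u1 u2, Γ.Adj u1 u2 ∧ u1 ∉ S ∧ u2 ∈ S ∧ u1 ∈ p.support ∧ u2 ∈ p.support := by
  intro v w p
  induction p with
  | nil => intro hv hw; exact absurd hw hv
  | @cons a b c h q ih =>
    intro hv hw
    by_cases hb : b ∈ S
    · exact ⟨a, b, h, hv, hb, SimpleGraph.Walk.start_mem_support _,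
        by simp [SimpleGraph.Walk.support_cons, SimpleGraph.Walk.start_mem_support]⟩
    · obtain ⟨u1, u2, hadj, h1, h2, hs1, hs2⟩ := ih hb hw
      exact ⟨u1, u2, hadj, h1, h2,
        by simp [SimpleGraph.Walk.support_cons, hs1],
        by simp [SimpleGraph.Walk.support_cons, hs2]⟩

/-- from Property 6 of the paper: merging two graphs at `z` and
extending with a 3/5-rigid pair whose new vertices connect (avoiding `z`) to both
parts yields a 3/5-rigid pair over the second part. -/
theorem stmt11 (Γ : SimpleGraph V) (z : V) (A1 A2 B : Finset V)
    (hint : A1 ∩ A2 = {z}) (hc1 : 2 ≤ A1.card) (hc2 : 2 ≤ A2.card)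
    (hA1 : IsNeutral Γ (3/5) A1 {z} ∨ IsRigid Γ (3/5) A1 {z})
    (hTB : A1 ∪ A2 ⊂ B)
    (hrig : IsRigid Γ (3/5) B (A1 ∪ A2))
    (hpath : ∀ v ∈ B \ (A1 ∪ A2),
      (∃ w ∈ A1, w ≠ z ∧ ∃ p : Γ.Walk v w, ∀ u ∈ p.support, u ∈ B ∧ u ≠ z) ∧
      (∃ w ∈ A2, w ≠ z ∧ ∃ p : Γ.Walk v w, ∀ u ∈ p.support, u ∈ B ∧ u ≠ z)) :
    IsRigid Γ (3/5) B A2 := by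
  have hzA : z ∈ A1 ∩ A2 := by rw [hint]; exact mem_singleton_self z
  have hzA1 : z ∈ A1 := (mem_inter.1 hzA).1
  have hzA2 : z ∈ A2 := (mem_inter.1 hzA).2
  have hA1B : A1 ⊆ B := subset_trans subset_union_left hTB.subset
  intro C hA2C hCB
  by_cases hA1C : A1 ⊆ C
  · exact hrig C (union_subset hA1C hA2C) hCB
  have hzC : z ∈ C := hA2C hzA2
  set D := A1 ∩ C with hDdef
  have hzD : z ∈ D := mem_inter.2 ⟨hzA1, hzC⟩
  have hzDsub : ({z} : Finset V) ⊆ D := singleton_subset_iff.2 hzD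
  have hDA1 : D ⊂ A1 := by
    refine ⟨inter_subset_left, fun h => hA1C fun x hx => (mem_inter.1 (h hx)).2⟩
  have hsub1 : C ⊆ C ∪ A1 := subset_union_left
  have hsub2 : C ∪ A1 ⊆ B := union_subset hCB.subset hA1B
  have hL2 : fW Γ (3/5) (C ∪ A1) C ≤ fW Γ (3/5) A1 D :=
    fW_union_le Γ (by norm_num) A1 C
  have hsplitD : fW Γ (3/5) A1 ({z} : Finset V) =
      fW Γ (3/5) A1 D + fW Γ (3/5) D ({z} : Finset V) :=
    fW_split Γ (3/5) hzDsub hDA1.subset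
  by_cases hfull : C ∪ A1 = B
  · -- B = C ∪ A1
    have hBC : fW Γ (3/5) B C ≤ fW Γ (3/5) A1 D := hfull ▸ hL2
    rcases hA1 with hn | hr
    · by_cases hDz : D = {z}
      · -- hard case: need an extra edge from the path hypothesis
        -- describe B \ C
        have hBCset : B \ C = A1 \ ({z} : Finset V) := by
          ext x
          simp only [mem_sdiff, mem_singleton]
          constructor
          · rintro ⟨hxB, hxC⟩
            have hxA1 : x ∈ A1 := by
              rcases mem_union.1 (hfull ▸ hxB : x ∈ C ∪ A1) with h | h
              · exact absurd h hxC
              · exact h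
            refine ⟨hxA1, fun h => hxC (h ▸ hzC)⟩
          · rintro ⟨hxA1, hxz⟩
            refine ⟨hA1B hxA1, fun hxC => hxz ?_⟩
            have : x ∈ D := mem_inter.2 ⟨hxA1, hxC⟩
            rw [hDz] at this
            exact mem_singleton.1 this
        -- find a crossing edge
        obtain ⟨v0, hv0B, hv0T⟩ := exists_of_ssubset hTB
        obtain ⟨⟨w, hwA1, hwz, p, hp⟩, -⟩ := hpath v0 (mem_sdiff.2 ⟨hv0B, hv0T⟩)
        have hv0A1 : v0 ∉ (↑A1 : Set V) := fun h =>
          hv0T (mem_union_left _ (by exact_mod_cast h))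
        obtain ⟨u1, u2, hadj, hu1, hu2, hs1, hs2⟩ :=
          walk_cross (↑A1 : Set V) p hv0A1 (by exact_mod_cast hwA1)
        have hu1B : u1 ∈ B := (hp u1 hs1).1
        have hu2B : u2 ∈ B := (hp u2 hs2).1
        have hu2z : u2 ≠ z := (hp u2 hs2).2
        have hu2A1 : u2 ∈ A1 := by exact_mod_cast hu2
        have hu1A1 : u1 ∉ A1 := fun h => hu1 (by exact_mod_cast h)
        have hu2C : u2 ∉ C := fun h => hu2z (by
          have : u2 ∈ D := mem_inter.2 ⟨hu2A1, h⟩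
          rw [hDz] at this
          exact mem_singleton.1 this)
        set e0 : Sym2 V := s(u1, u2) with he0
        have he0mem : e0 ∈ ES Γ B C := by
          refine ⟨Γ.mem_edgeSet.2 hadj, ?_, u2, ?_, hu2B, hu2C⟩
          · intro x hx
            rcases Sym2.mem_iff.1 hx with h | h
            · exact h ▸ hu1B
            · exact h ▸ hu2B
          · exact Sym2.mem_iff.2 (Or.inr rfl)
        have he0not : e0 ∉ ES Γ A1 ({z} : Finset V) := by
          rintro ⟨-, hall, -⟩
          exact hu1A1 (hall u1 (Sym2.mem_iff.2 (Or.inl rfl)))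
        have hsubES : insert e0 (ES Γ A1 ({z} : Finset V)) ⊆ ES Γ B C := by
          intro e he
          rcases Set.mem_insert_iff.1 he with h | h
          · exact h ▸ he0mem
          · obtain ⟨hee, hall, x, hx, hxA1, hxz⟩ := h
            refine ⟨hee, fun y hy => hA1B (hall y hy), x, hx, hA1B hxA1, fun hxC => hxz ?_⟩
            have : x ∈ D := mem_inter.2 ⟨hxA1, hxC⟩
            rw [hDz] at this
            exact this
        have hecount : edgeCount Γ A1 ({z} : Finset V) + 1 ≤ edgeCount Γ B C := by
          rw [edgeCount_eq, edgeCount_eq]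
          calc (ES Γ A1 ({z} : Finset V)).ncard + 1
              = (insert e0 (ES Γ A1 ({z} : Finset V))).ncard := by
                rw [Set.ncard_insert_of_notMem he0not (Set.toFinite _)]
            _ ≤ (ES Γ B C).ncard := Set.ncard_le_ncard hsubES (Set.toFinite _)
        have hvcard : ((B \ C).card : ℝ) = ((A1 \ ({z} : Finset V)).card : ℝ) := by
          rw [hBCset]
        have hfzero : fW Γ (3/5) A1 ({z} : Finset V) = 0 := hn.2
        have hecast : (edgeCount Γ A1 ({z} : Finset V) : ℝ) + 1 ≤ (edgeCount Γ B C : ℝ) := by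
          exact_mod_cast hecount
        simp only [fW] at hfzero ⊢
        nlinarith [hecast, hvcard, hfzero]
      · have hDz' : ({z} : Finset V) ⊂ D := ⟨hzDsub, fun h => hDz (subset_antisymm h hzDsub)⟩
        have hpos : 0 < fW Γ (3/5) D ({z} : Finset V) := hn.1 D hDz' hDA1
        linarith [hn.2, hsplitD, hBC]
    · linarith [hr D hzDsub hDA1, hBC]
  · have hCA1B : C ∪ A1 ⊂ B := ⟨hsub2, fun h => hfull (subset_antisymm hsub2 h)⟩
    have h1 : fW Γ (3/5) B C = fW Γ (3/5) B (C ∪ A1) + fW Γ (3/5) (C ∪ A1) C :=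
      fW_split Γ (3/5) hsub1 hsub2
    have h2 : fW Γ (3/5) B (C ∪ A1) < 0 :=
      hrig (C ∪ A1) (union_subset subset_union_right (subset_trans hA2C subset_union_left)) hCA1B
    have h3 : fW Γ (3/5) A1 D ≤ 0 := by
      rcases hA1 with hn | hr
      · by_cases hDz : D = {z}
        · rw [hDz]; exact le_of_eq hn.2
        · have hDz' : ({z} : Finset V) ⊂ D := ⟨hzDsub, fun h => hDz (subset_antisymm h hzDsub)⟩
          have hpos : 0 < fW Γ (3/5) D ({z} : Finset V) := hn.1 D hDz' hDA1
          linarith [hn.2, hsplitD]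
      · exact le_of_lt (hr D hzDsub hDA1)
    linarith
end
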